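/- arXiv:1805.02863 — 3 statements merged into one kernel-verified Lean document; each statement's English description precedes it below -/
import Mathlib

section
/- Let q = p^f be a prime power, let A be a finite direct sum of finite field extensions of 𝔽_q, let ζ_p be a primitive p-th root of unity in ℂ, and let ψ(x) = ζ_p^{Tr_{A/𝔽_p}(x)} be the trace additive character. Then for every multiplicative character χ : A^× → ℂ^× there exists a nonnegative integer f' such that |g_A(χ)|² = q^{f'}, where g_A(χ) = Σ_{x ∈ A^×} ψ(x) χ(x). -/
/-! Since `A = ∏ᵢ Kᵢ`, we have `Aˣ = ∏ᵢ Kᵢˣ`, `Tr_A(x) = ∑ᵢ Tr_{Kᵢ}(xᵢ)`, and `χ` is the product of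
its restrictions `χᵢ` to the factors, so `g_A(χ) = ∏ᵢ g_{Kᵢ}(χᵢ)`. On each finite field `Kᵢ` the
trace is a nonzero map (`Kᵢ/𝔽_p` is separable), so the trace character `ψ` is nontrivial. Hence
`g_{Kᵢ}(χᵢ) = -1` if `χᵢ = 1`, and otherwise `|g_{Kᵢ}(χᵢ)|² = g(χᵢ, ψ) g(χᵢ⁻¹, ψ⁻¹) = |Kᵢ|`,
which is `q^{[Kᵢ : 𝔽_q]}`. -/

open scoped BigOperators

/-- The trace additive character `ψ_A(x) = ζ_p^{Tr_{A/𝔽_p}(x)}` of a finite `ZMod p`-algebra. -/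
noncomputable def traceAddChar (p : ℕ) [Fact p.Prime] (A : Type*) [CommRing A]
    [Algebra (ZMod p) A] (ζ : ℂ) (x : A) : ℂ :=
  ζ ^ (Algebra.trace (ZMod p) A x).val

/-- The Gauss sum `g_A(χ) = ∑_{x ∈ A^×} ψ_A(x) χ(x)` of a multiplicative character `χ`
of a finite commutative algebra `A`, with respect to the trace additive character. -/
noncomputable def algGaussSum (p : ℕ) [Fact p.Prime] (A : Type*) [CommRing A] [Fintype A]
    [DecidableEq A] [Algebra (ZMod p) A] (ζ : ℂ) (χ : Aˣ →* ℂˣ) : ℂ :=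
  ∑ x : Aˣ, traceAddChar p A ζ (x : A) * (χ x : ℂ)

theorem AddChar.map_sum_eq_prod {A M ι : Type*} [AddCommMonoid A] [CommMonoid M]
    (ψ : AddChar A M) (s : Finset ι) (f : ι → A) : ψ (∑ i ∈ s, f i) = ∏ i ∈ s, ψ (f i) := by
  classical
  induction s using Finset.induction_on with
  | empty => simp
  | insert a s ha ih => rw [Finset.sum_insert ha, Finset.prod_insert ha, ψ.map_add_eq_mul, ih]

theorem Algebra.trace_pi_apply (R : Type*) [CommRing R] {ι : Type*} [Fintype ι] [DecidableEq ι]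
    (S : ι → Type*) [∀ i, CommRing (S i)] [∀ i, Algebra R (S i)]
    [∀ i, Module.Free R (S i)] [∀ i, Module.Finite R (S i)] (x : ∀ i, S i) :
    Algebra.trace R (∀ i, S i) x = ∑ i, Algebra.trace R (S i) (x i) := by
  have hsingle (i : ι) (y : S i) :
      Algebra.trace R (∀ i, S i) (Pi.single i y) = Algebra.trace R (S i) y := by
    have : Algebra.lmul R (∀ i, S i) (Pi.single i y) =
        LinearMap.single R S i ∘ₗ (Algebra.lmul R (S i) y ∘ₗ LinearMap.proj i) := by
      refine LinearMap.ext fun z => ?_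
      simp [Pi.single_mul_left]
    rw [Algebra.trace_apply, this, LinearMap.trace_comp_comm', LinearMap.comp_assoc,
      LinearMap.proj_comp_single_same, LinearMap.comp_id, Algebra.trace_apply]
  conv_lhs => rw [← Finset.univ_sum_single x]
  simp [map_sum, hsingle]

section UnitGaussSum

variable {A : Type*} [CommRing A] [Fintype A] [DecidableEq A]

noncomputable def unitGaussSum (ψ : AddChar A ℂ) (χ : Aˣ →* ℂˣ) : ℂ :=
  ∑ u : Aˣ, ψ u * χ u

theorem unitGaussSum_eq_gaussSum (ψ : AddChar A ℂ) (χ : Aˣ →* ℂˣ) :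
    unitGaussSum ψ χ = gaussSum (MulChar.ofUnitHom χ) ψ := by
  refine Fintype.sum_of_injective (Units.val : Aˣ → A) Units.val_injective _ _ ?_ ?_
  · intro a ha
    rw [MulChar.map_nonunit _ fun h => ha ⟨h.unit, rfl⟩, zero_mul]
  · intro u
    rw [MulChar.ofUnitHom_coe, mul_comm]

theorem norm_sq_unitGaussSum_of_ne_one {K : Type*} [Field K] [Fintype K] [DecidableEq K]
    {ψ : AddChar K ℂ} (hψ : ψ ≠ 1) {χ : Kˣ →* ℂˣ} (hχ : χ ≠ 1) :
    ‖unitGaussSum ψ χ‖ ^ 2 = Fintype.card K := by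
  have hχ' : MulChar.ofUnitHom χ ≠ 1 := fun h => hχ <| MonoidHom.ext fun u => Units.ext <| by
    simpa [MulChar.ofUnitHom_coe] using congr($h (u : K))
  have hcard := gaussSum_mul_gaussSum_eq_card hχ' (AddChar.IsPrimitive.of_ne_one hψ)
  rw [← star_gaussSum_eq, Complex.star_def, Complex.mul_conj] at hcard
  rw [unitGaussSum_eq_gaussSum, Complex.sq_norm]
  exact_mod_cast hcard

theorem unitGaussSum_one {K : Type*} [Field K] [Fintype K] [DecidableEq K]
    {ψ : AddChar K ℂ} (hψ : ψ ≠ 1) : unitGaussSum ψ 1 = -1 := by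
  have h1 : MulChar.ofUnitHom (1 : Kˣ →* ℂˣ) = 1 :=
    MulChar.ext fun u => by
      rw [MulChar.ofUnitHom_coe, MulChar.one_apply_coe, MonoidHom.one_apply, Units.val_one]
  rw [unitGaussSum_eq_gaussSum, h1, gaussSum_one_left hψ]

theorem exists_norm_sq_unitGaussSum_eq_card_pow (F : Type*) [Field F] [Fintype F]
    {K : Type*} [Field K] [Fintype K] [DecidableEq K] [Algebra F K]
    {ψ : AddChar K ℂ} (hψ : ψ ≠ 1) (χ : Kˣ →* ℂˣ) :
    ∃ e : ℕ, ‖unitGaussSum ψ χ‖ ^ 2 = (Fintype.card F : ℝ) ^ e := by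
  by_cases hχ : χ = 1
  · exact ⟨0, by simp [hχ, unitGaussSum_one hψ]⟩
  · refine ⟨Module.finrank F K, ?_⟩
    rw [norm_sq_unitGaussSum_of_ne_one hψ hχ, Module.card_eq_pow_finrank (K := F) (V := K),
      Nat.cast_pow]

end UnitGaussSum

section Pi

variable {ι : Type*} [DecidableEq ι] {R : ι → Type*}

def MonoidHom.piUnitsComponent {M : Type*} [∀ i, Monoid (R i)] [Monoid M]
    (χ : (∀ i, R i)ˣ →* M) (i : ι) : (R i)ˣ →* M :=
  χ.comp (MulEquiv.piUnits.symm.toMonoidHom.comp (MonoidHom.mulSingle (fun i => (R i)ˣ) i))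

variable [Fintype ι]

theorem MonoidHom.apply_eq_prod_piUnitsComponent {M : Type*} [∀ i, CommMonoid (R i)]
    [CommMonoid M] (χ : (∀ i, R i)ˣ →* M) (u : (∀ i, R i)ˣ) :
    χ u = ∏ i, χ.piUnitsComponent i (MulEquiv.piUnits u i) := by
  conv_lhs => rw [← MulEquiv.piUnits.symm_apply_apply u,
    ← Finset.univ_prod_mulSingle (MulEquiv.piUnits u)]
  rw [map_prod, map_prod]
  rfl

variable [∀ i, CommRing (R i)] [∀ i, Fintype (R i)] [∀ i, DecidableEq (R i)]

theorem unitGaussSum_pi {ψ : AddChar (∀ i, R i) ℂ} {φ : ∀ i, AddChar (R i) ℂ}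
    (hψ : ∀ x, ψ x = ∏ i, φ i (x i)) (χ : (∀ i, R i)ˣ →* ℂˣ) :
    unitGaussSum ψ χ = ∏ i, unitGaussSum (φ i) (χ.piUnitsComponent i) := by
  simp only [unitGaussSum]
  rw [Finset.prod_univ_sum, Fintype.piFinset_univ]
  refine Fintype.sum_equiv MulEquiv.piUnits.toEquiv _ _ fun u => ?_
  rw [hψ, χ.apply_eq_prod_piUnitsComponent, Units.coe_prod, ← Finset.prod_mul_distrib]
  rfl

end Pi

section TraceChar

variable (p : ℕ) [Fact p.Prime] {ζ : ℂ}

noncomputable def traceChar (A : Type*) [CommRing A] [Algebra (ZMod p) A] (hζ : ζ ^ p = 1) :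
    AddChar A ℂ :=
  (AddChar.zmodChar p hζ).compAddMonoidHom (Algebra.trace (ZMod p) A).toAddMonoidHom

theorem algGaussSum_eq_unitGaussSum (A : Type*) [CommRing A] [Fintype A] [DecidableEq A]
    [Algebra (ZMod p) A] (hζ : ζ ^ p = 1) (χ : Aˣ →* ℂˣ) :
    algGaussSum p A ζ χ = unitGaussSum (traceChar p A hζ) χ :=
  rfl

theorem traceChar_pi_apply {ι : Type*} [Fintype ι] [DecidableEq ι] (S : ι → Type*)
    [∀ i, CommRing (S i)] [∀ i, Algebra (ZMod p) (S i)] [∀ i, Module.Finite (ZMod p) (S i)]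
    (hζ : ζ ^ p = 1) (x : ∀ i, S i) :
    traceChar p (∀ i, S i) hζ x = ∏ i, traceChar p (S i) hζ (x i) := by
  simp only [traceChar, AddChar.compAddMonoidHom_apply, LinearMap.toAddMonoidHom_coe,
    Algebra.trace_pi_apply, AddChar.map_sum_eq_prod]

theorem traceChar_ne_one (K : Type*) [Field K] [Finite K] [Algebra (ZMod p) K]
    (hζ : IsPrimitiveRoot ζ p) : traceChar p K hζ.pow_eq_one ≠ 1 := by
  obtain ⟨b, hb⟩ := DFunLike.ne_iff.mp (Algebra.trace_ne_zero (ZMod p) K)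
  refine AddChar.ne_one_iff.mpr ⟨b, fun h => hb ?_⟩
  exact ((AddChar.zmodChar_primitive_of_primitive_root p hζ).zmod_char_eq_one_iff p _).mp h

end TraceChar

theorem abs_sq_algGaussSum_eq_pow_card_general
    (p : ℕ) [Fact p.Prime] (F : Type*) [Field F] [Fintype F]
    (ι : Type*) [Fintype ι] [DecidableEq ι]
    (K : ι → Type*) [∀ i, Field (K i)] [∀ i, Fintype (K i)] [∀ i, DecidableEq (K i)]
    [∀ i, Algebra (ZMod p) (K i)] [∀ i, Algebra F (K i)]
    (ζ : ℂ) (hζ : IsPrimitiveRoot ζ p)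
    (χ : (∀ i, K i)ˣ →* ℂˣ) :
    ∃ f' : ℕ, ‖algGaussSum p (∀ i, K i) ζ χ‖ ^ 2 = (Fintype.card F : ℝ) ^ f' := by
  choose e he using fun i => exists_norm_sq_unitGaussSum_eq_card_pow F
    (traceChar_ne_one p (K i) hζ) (χ.piUnitsComponent i)
  refine ⟨∑ i, e i, ?_⟩
  rw [algGaussSum_eq_unitGaussSum p _ hζ.pow_eq_one,
    unitGaussSum_pi (traceChar_pi_apply p K hζ.pow_eq_one), norm_prod, ← Finset.prod_pow,
    Finset.prod_congr rfl fun i _ => he i, Finset.prod_pow_eq_pow_sum]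

/-- **Absolute value of Gauss sums on semisimple algebras** (Beukers, Prop. in §2).
Let `A = ⊕ᵢ Kᵢ` be a finite direct sum of finite field extensions of `𝔽_q`, with the
trace additive character `ψ(x) = ζ^{Tr_{A/𝔽_p}(x)}`. Then for every multiplicative
character `χ : A^× → ℂ^×` there is a nonnegative integer `f'` with `|g_A(χ)|² = q^{f'}`. -/
theorem abs_sq_algGaussSum_eq_pow_card
    (p : ℕ) [Fact p.Prime] (F : Type*) [Field F] [Fintype F] [Algebra (ZMod p) F]
    (ι : Type*) [Fintype ι] [DecidableEq ι]
    (K : ι → Type*) [∀ i, Field (K i)] [∀ i, Fintype (K i)] [∀ i, DecidableEq (K i)]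
    [∀ i, Algebra (ZMod p) (K i)] [∀ i, Algebra F (K i)]
    [∀ i, IsScalarTower (ZMod p) F (K i)]
    (ζ : ℂ) (hζ : IsPrimitiveRoot ζ p)
    (χ : (∀ i, K i)ˣ →* ℂˣ) :
    ∃ f' : ℕ, ‖algGaussSum p (∀ i, K i) ζ χ‖ ^ 2 = (Fintype.card F : ℝ) ^ f' :=
  abs_sq_algGaussSum_eq_pow_card_general p F ι K ζ hζ χ
end

section
/- Let q be a power of the prime p, ω a generator of the group of multiplicative characters of 𝔽_q^×, and let α = (α_1,…,α_d), β = (β_1,…,β_d) be multisets of rational numbers, disjoint modulo ℤ, with (q−1)α_i ∈ ℤ and (q−1)β_j ∈ ℤ for all i, j. Then the value H_q(α,β|t) is independent of the choice of primitive p-th root of unity: if ζ and ζ' are two primitive p-th roots of unity in ℂ, the finite hypergeometric sums defined using the additive characters ζ^{Tr_{𝔽_q/𝔽_p}(·)} and ζ'^{Tr_{𝔽_q/𝔽_p}(·)} are equal for every t ∈ 𝔽_q. -/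
open scoped BigOperators

/-- The Gauss sum `g(k) = ∑_{x ∈ 𝔽_q^×} ω(x)^k ψ_q(x)` over the finite field `𝔽_q`,
where `ψ_q(x) = ζ^{Tr_{𝔽_q/𝔽_p}(x)}`. -/
noncomputable def fieldGaussSum (p : ℕ) [Fact p.Prime] (F : Type*) [Field F] [Fintype F]
    [DecidableEq F] [Algebra (ZMod p) F] (ζ : ℂ) (ω : MulChar F ℂ) (k : ℤ) : ℂ :=
  ∑ x : Fˣ, (ω (x : F)) ^ k * ζ ^ (Algebra.trace (ZMod p) F (x : F)).val

/-- The finite hypergeometric sum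
`H_q(α,β|t) = (1/(1−q)) ∑_{m=0}^{q−2}
  ∏ᵢ (g(m+(q−1)αᵢ) g(−m−(q−1)βᵢ) / (g((q−1)αᵢ) g(−(q−1)βᵢ))) · ω((−1)^d t)^m`,
expressed via the integers `aᵢ = (q−1)αᵢ` and `bᵢ = (q−1)βᵢ`. -/
noncomputable def finHG (p : ℕ) [Fact p.Prime] (F : Type*) [Field F] [Fintype F]
    [DecidableEq F] [Algebra (ZMod p) F] (ζ : ℂ) (ω : MulChar F ℂ)
    (d : ℕ) (a b : Fin d → ℤ) (t : F) : ℂ :=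
  (1 / (1 - (Fintype.card F : ℂ))) *
    ∑ m ∈ Finset.range (Fintype.card F - 1),
      (∏ i, (fieldGaussSum p F ζ ω ((m : ℤ) + a i) *
            fieldGaussSum p F ζ ω (-(m : ℤ) - b i)) /
          (fieldGaussSum p F ζ ω (a i) * fieldGaussSum p F ζ ω (-(b i)))) *
        (ω ((-1) ^ d * t)) ^ m

/-! Replacing `ζ` by another primitive `p`-th root of unity `ζ ^ s` amounts to substituting
`x ↦ s x` in every Gauss sum, so `g(k)` is multiplied by `ω(s)^(-k)`. In each factor
`g(m + aᵢ) g(-m - bᵢ) / (g(aᵢ) g(-bᵢ))` of the hypergeometric sum these scalars multiply both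
numerator and denominator by `ω(s)^(bᵢ - aᵢ)`, so they cancel. -/

theorem pow_pow_val_eq_pow_val_nsmul {M : Type*} [CommMonoid M] {n : ℕ} [NeZero n] {ζ : M}
    (hζ : ζ ^ n = 1) (s : ℕ) (x : ZMod n) : (ζ ^ s) ^ x.val = ζ ^ (s • x).val := by
  rw [← AddChar.zmodChar_apply hζ, AddChar.map_nsmul_eq_pow, AddChar.zmodChar_apply, ← pow_mul,
    ← pow_mul, mul_comm]

section GaussSum

variable (p : ℕ) [Fact p.Prime] (F : Type*) [Field F] [Fintype F] [DecidableEq F]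
  [Algebra (ZMod p) F] {ζ : ℂ} (ω : MulChar F ℂ)

theorem fieldGaussSum_pow (hζ : ζ ^ p = 1) {s : ℕ} (hs : (s : F) ≠ 0) (k : ℤ) :
    fieldGaussSum p F (ζ ^ s) ω k = ω s ^ (-k) * fieldGaussSum p F ζ ω k := by
  set u : Fˣ := Units.mk0 (s : F) hs
  have hωu : ∀ x : Fˣ, ω ((u⁻¹ * x : Fˣ) : F) = (ω s)⁻¹ * ω x := by
    intro x
    rw [Units.val_mul, map_mul, Units.val_inv_eq_inv_val, Units.val_mk0, ← MulChar.inv_apply',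
      MulChar.inv_apply_eq_inv']
  calc fieldGaussSum p F (ζ ^ s) ω k
      = ∑ x : Fˣ, ω x ^ k * ζ ^ (Algebra.trace (ZMod p) F (u * x : Fˣ)).val := by
        refine Finset.sum_congr rfl fun x _ => ?_
        rw [pow_pow_val_eq_pow_val_nsmul hζ, ← map_nsmul, Units.val_mul, Units.val_mk0,
          nsmul_eq_mul]
    _ = ∑ x : Fˣ, ω (u⁻¹ * x : Fˣ) ^ k * ζ ^ (Algebra.trace (ZMod p) F x).val :=
        Fintype.sum_equiv (Equiv.mulLeft u) _ _ fun x => by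
          simp only [Equiv.coe_mulLeft, inv_mul_cancel_left]
    _ = ω s ^ (-k) * fieldGaussSum p F ζ ω k := by
        rw [fieldGaussSum, Finset.mul_sum]
        refine Finset.sum_congr rfl fun x _ => ?_
        rw [hωu, mul_zpow, inv_zpow, ← zpow_neg, mul_assoc]

theorem fieldGaussSum_pow_ratio (hζ : ζ ^ p = 1) {s : ℕ} (hs : (s : F) ≠ 0) (m a b : ℤ) :
    fieldGaussSum p F (ζ ^ s) ω (m + a) * fieldGaussSum p F (ζ ^ s) ω (-m - b) /
        (fieldGaussSum p F (ζ ^ s) ω a * fieldGaussSum p F (ζ ^ s) ω (-b)) =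
      fieldGaussSum p F ζ ω (m + a) * fieldGaussSum p F ζ ω (-m - b) /
        (fieldGaussSum p F ζ ω a * fieldGaussSum p F ζ ω (-b)) := by
  have hω : ω s ≠ 0 := ((Ne.isUnit hs).map ω).ne_zero
  have hscale : ω s ^ (-(m + a)) * ω s ^ (-(-m - b)) = ω s ^ (-a) * ω s ^ (-(-b)) := by
    rw [← zpow_add₀ hω, ← zpow_add₀ hω]
    congr 1
    ring
  simp only [fieldGaussSum_pow p F ω hζ hs]
  calc _ = ω s ^ (-(m + a)) * ω s ^ (-(-m - b)) *
          (fieldGaussSum p F ζ ω (m + a) * fieldGaussSum p F ζ ω (-m - b)) /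
        (ω s ^ (-a) * ω s ^ (-(-b)) *
          (fieldGaussSum p F ζ ω a * fieldGaussSum p F ζ ω (-b))) := by ring
    _ = _ := by
      rw [hscale, mul_div_mul_left _ _ (mul_ne_zero (zpow_ne_zero _ hω) (zpow_ne_zero _ hω))]

end GaussSum

theorem finHG_indep_of_zeta_general
    (p : ℕ) [Fact p.Prime] (F : Type*) [Field F] [Fintype F] [DecidableEq F]
    [Algebra (ZMod p) F]
    (ζ ζ' : ℂ) (hζ : IsPrimitiveRoot ζ p) (hζ' : IsPrimitiveRoot ζ' p)
    (ω : MulChar F ℂ)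
    (d : ℕ)
    (a b : Fin d → ℤ)
    (t : F) :
    finHG p F ζ ω d a b t = finHG p F ζ' ω d a b t := by
  obtain ⟨s, -, hs, rfl⟩ := hζ.isPrimitiveRoot_iff.mp hζ'
  have hsF : (s : F) ≠ 0 := by
    rw [← map_natCast (algebraMap (ZMod p) F), ne_eq,
      map_eq_zero_iff _ (algebraMap (ZMod p) F).injective, ZMod.natCast_eq_zero_iff]
    exact (Nat.Prime.coprime_iff_not_dvd Fact.out).mp hs.symm
  simp only [finHG, fieldGaussSum_pow_ratio p F ω hζ.pow_eq_one hsF]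

/-- **Independence of the finite hypergeometric sum of the choice of `ζ_p`** (Beukers, §1).
Let `α, β` be multisets of rationals, disjoint modulo `ℤ`, with `(q−1)αᵢ, (q−1)βⱼ ∈ ℤ`.
If `ζ` and `ζ'` are two primitive `p`-th roots of unity in `ℂ`, then the finite
hypergeometric sums built with the additive characters `ζ^{Tr(·)}` and `ζ'^{Tr(·)}`
coincide for every `t ∈ 𝔽_q`. -/
theorem finHG_indep_of_zeta
    (p : ℕ) [Fact p.Prime] (F : Type*) [Field F] [Fintype F] [DecidableEq F]
    [Algebra (ZMod p) F]
    (ζ ζ' : ℂ) (hζ : IsPrimitiveRoot ζ p) (hζ' : IsPrimitiveRoot ζ' p)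
    (ω : MulChar F ℂ) (hω : Function.Injective fun x : Fˣ => ω (x : F))
    (d : ℕ) (α β : Fin d → ℚ)
    (hdisj : ∀ i j, ¬ ∃ n : ℤ, α i - β j = (n : ℚ))
    (a b : Fin d → ℤ)
    (ha : ∀ i, (a i : ℚ) = ((Fintype.card F : ℚ) - 1) * α i)
    (hb : ∀ j, (b j : ℚ) = ((Fintype.card F : ℚ) - 1) * β j)
    (t : F) :
    finHG p F ζ ω d a b t = finHG p F ζ' ω d a b t :=
  finHG_indep_of_zeta_general p F ζ ζ' hζ hζ' ω d a b t
end

section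
/- Let q be a power of the prime p and let α = (α_1,…,α_d), β = (β_1,…,β_d) be multisets of rational numbers, disjoint modulo ℤ, with (q−1)α_i ∈ ℤ and (q−1)β_j ∈ ℤ for all i, j. Suppose that for every integer k coprime to q−1 the multiset (kα_1,…,kα_d) is a permutation of (α_1,…,α_d) modulo ℤ and the multiset (kβ_1,…,kβ_d) is a permutation of (β_1,…,β_d) modulo ℤ (i.e. the hypergeometric data is defined over ℚ). Then H_q(α,β|t) is independent of the choice of generator ω of the group of multiplicative characters of 𝔽_q^×: for any two generators ω, ω' the corresponding finite hypergeometric sums agree for every t ∈ 𝔽_q. -/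
open scoped BigOperators

private lemma aux_pow_mod (w : ℂ) (n : ℕ) (h : w ^ n = 1) (a : ℕ) :
    w ^ a = w ^ (a % n) := by
  conv_lhs => rw [← Nat.div_add_mod a n, pow_add, pow_mul, h, one_pow, one_mul]

private lemma finHG_sum_aux {n d : ℕ} [NeZero n] (G G' : ℤ → ℂ) (w w' : ℂ)
    (a b : Fin d → ℤ) (k : ℕ)
    (hG' : ∀ m : ℤ, G' m = G ((k : ℤ) * m))
    (hGper : ∀ m c : ℤ, G (m + (n : ℤ) * c) = G m)
    (s s' : Equiv.Perm (Fin d))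
    (hsa : ∀ i, ∃ c : ℤ, (k : ℤ) * a i = a (s i) + (n : ℤ) * c)
    (hsb : ∀ j, ∃ c : ℤ, (k : ℤ) * b j = b (s' j) + (n : ℤ) * c)
    (hw : ∀ m : ZMod n, w' ^ m.val = w ^ ((k : ZMod n) * m).val)
    (hkcop : Nat.Coprime k n) :
    ∑ m ∈ Finset.range n,
      (∏ i, (G' ((m : ℤ) + a i) * G' (-(m : ℤ) - b i)) / (G' (a i) * G' (-(b i)))) * w' ^ m
    = ∑ m ∈ Finset.range n,
      (∏ i, (G ((m : ℤ) + a i) * G (-(m : ℤ) - b i)) / (G (a i) * G (-(b i)))) * w ^ m := by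
  classical
  have t1 : ∀ (h : ℕ → ℂ), ∑ m ∈ Finset.range n, h m = ∑ m : ZMod n, h m.val := by
    intro h
    refine Finset.sum_nbij' (fun m : ℕ => (m : ZMod n)) (fun m : ZMod n => m.val)
      (fun a _ => Finset.mem_univ _)
      (fun a _ => Finset.mem_range.mpr (ZMod.val_lt a)) ?_ ?_ ?_
    · intro a ha
      show ((a : ZMod n)).val = a
      rw [ZMod.val_natCast, Nat.mod_eq_of_lt (Finset.mem_range.mp ha)]
    · intro a _
      show ((a.val : ℕ) : ZMod n) = a
      simp [ZMod.natCast_val, ZMod.cast_id]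
    · intro a ha
      show h a = h (((a : ZMod n)).val)
      rw [ZMod.val_natCast, Nat.mod_eq_of_lt (Finset.mem_range.mp ha)]
  have key : ∀ m : ZMod n,
      (∏ i, (G' ((m.val : ℤ) + a i) * G' (-(m.val : ℤ) - b i)) / (G' (a i) * G' (-(b i)))) *
        w' ^ m.val
      = (∏ i, (G ((((k : ZMod n) * m).val : ℤ) + a i) *
            G (-(((k : ZMod n) * m).val : ℤ) - b i)) / (G (a i) * G (-(b i)))) *
          w ^ ((k : ZMod n) * m).val := by
    intro m
    set M : ℕ := m.val with hM
    set M' : ℕ := ((k : ZMod n) * m).val with hM'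
    have hMM' : ∃ c : ℤ, (k : ℤ) * M = (M' : ℤ) + (n : ℤ) * c := by
      have h1 : M' = k * M % n := by
        rw [hM', ZMod.val_mul, ZMod.val_natCast, Nat.mod_mul_mod]
      refine ⟨(k * M / n : ℕ), ?_⟩
      have h2 : ((n * (k * M / n) + k * M % n : ℕ) : ℤ) = ((k * M : ℕ) : ℤ) := by
        exact_mod_cast congrArg (fun x : ℕ => (x : ℤ)) (Nat.div_add_mod (k * M) n)
      push_cast at h2
      rw [h1]
      push_cast
      linarith
    obtain ⟨c, hc⟩ := hMM'
    have h1 : ∀ i, G' ((M : ℤ) + a i) = G ((M' : ℤ) + a (s i)) := by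
      intro i
      obtain ⟨ci, hci⟩ := hsa i
      rw [hG']
      have he : (k : ℤ) * ((M : ℤ) + a i) = ((M' : ℤ) + a (s i)) + (n : ℤ) * (c + ci) := by
        linear_combination hc + hci
      rw [he, hGper]
    have h2 : ∀ i, G' (-(M : ℤ) - b i) = G (-(M' : ℤ) - b (s' i)) := by
      intro i
      obtain ⟨ci, hci⟩ := hsb i
      rw [hG']
      have he : (k : ℤ) * (-(M : ℤ) - b i) = (-(M' : ℤ) - b (s' i)) + (n : ℤ) * (-(c + ci)) := by
        linear_combination -hc - hci
      rw [he, hGper]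
    have h3 : ∀ i, G' (a i) = G (a (s i)) := by
      intro i
      obtain ⟨ci, hci⟩ := hsa i
      rw [hG', hci, hGper]
    have h4 : ∀ i, G' (-(b i)) = G (-(b (s' i))) := by
      intro i
      obtain ⟨ci, hci⟩ := hsb i
      rw [hG']
      have he : (k : ℤ) * (-(b i)) = (-(b (s' i))) + (n : ℤ) * (-ci) := by
        linear_combination -hci
      rw [he, hGper]
    have hprod :
        (∏ i, (G' ((M : ℤ) + a i) * G' (-(M : ℤ) - b i)) / (G' (a i) * G' (-(b i))))
        = ∏ i, (G ((M' : ℤ) + a i) * G (-(M' : ℤ) - b i)) / (G (a i) * G (-(b i))) := by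
      calc (∏ i, (G' ((M : ℤ) + a i) * G' (-(M : ℤ) - b i)) / (G' (a i) * G' (-(b i))))
          = ∏ i, (G ((M' : ℤ) + a (s i)) / G (a (s i))) *
              (G (-(M' : ℤ) - b (s' i)) / G (-(b (s' i)))) := by
            refine Finset.prod_congr rfl fun i _ => ?_
            rw [h1 i, h2 i, h3 i, h4 i, ← div_mul_div_comm]
        _ = (∏ i, G ((M' : ℤ) + a (s i)) / G (a (s i))) *
              (∏ i, G (-(M' : ℤ) - b (s' i)) / G (-(b (s' i)))) := Finset.prod_mul_distrib
        _ = (∏ i, G ((M' : ℤ) + a i) / G (a i)) *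
              (∏ i, G (-(M' : ℤ) - b i) / G (-(b i))) := by
            rw [Equiv.prod_comp s (fun i => G ((M' : ℤ) + a i) / G (a i)),
              Equiv.prod_comp s' (fun i => G (-(M' : ℤ) - b i) / G (-(b i)))]
        _ = ∏ i, (G ((M' : ℤ) + a i) * G (-(M' : ℤ) - b i)) / (G (a i) * G (-(b i))) := by
            rw [← Finset.prod_mul_distrib]
            exact Finset.prod_congr rfl fun i _ => div_mul_div_comm _ _ _ _
    rw [hprod, hw m]
  have hkunit : IsUnit (k : ZMod n) := (ZMod.isUnit_iff_coprime k n).mpr hkcop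
  let e : Equiv.Perm (ZMod n) :=
    ⟨fun m => (k : ZMod n) * m, fun m => ((hkunit.unit⁻¹ : (ZMod n)ˣ) : ZMod n) * m,
      fun m => by
        show ((hkunit.unit⁻¹ : (ZMod n)ˣ) : ZMod n) * ((k : ZMod n) * m) = m
        rw [← mul_assoc, hkunit.val_inv_mul, one_mul],
      fun m => by
        show (k : ZMod n) * (((hkunit.unit⁻¹ : (ZMod n)ˣ) : ZMod n) * m) = m
        rw [mul_comm ((hkunit.unit⁻¹ : (ZMod n)ˣ) : ZMod n) m, ← mul_assoc,
          mul_comm ((k : ZMod n)) m, mul_assoc, hkunit.mul_val_inv, mul_one]⟩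
  calc ∑ m ∈ Finset.range n,
        (∏ i, (G' ((m : ℤ) + a i) * G' (-(m : ℤ) - b i)) / (G' (a i) * G' (-(b i)))) * w' ^ m
      = ∑ m : ZMod n,
        (∏ i, (G' ((m.val : ℤ) + a i) * G' (-(m.val : ℤ) - b i)) / (G' (a i) * G' (-(b i)))) *
          w' ^ m.val := t1 (fun m : ℕ =>
            (∏ i, (G' ((m : ℤ) + a i) * G' (-(m : ℤ) - b i)) / (G' (a i) * G' (-(b i)))) *
              w' ^ m)
    _ = ∑ m : ZMod n,
        (∏ i, (G ((((k : ZMod n) * m).val : ℤ) + a i) *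
            G (-(((k : ZMod n) * m).val : ℤ) - b i)) / (G (a i) * G (-(b i)))) *
          w ^ ((k : ZMod n) * m).val := Finset.sum_congr rfl fun m _ => key m
    _ = ∑ m : ZMod n,
        (∏ i, (G ((m.val : ℤ) + a i) * G (-(m.val : ℤ) - b i)) / (G (a i) * G (-(b i)))) *
          w ^ m.val :=
        Equiv.sum_comp e (fun m : ZMod n =>
          (∏ i, (G ((m.val : ℤ) + a i) * G (-(m.val : ℤ) - b i)) / (G (a i) * G (-(b i)))) *
            w ^ m.val)
    _ = ∑ m ∈ Finset.range n,
        (∏ i, (G ((m : ℤ) + a i) * G (-(m : ℤ) - b i)) / (G (a i) * G (-(b i)))) * w ^ m :=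
        (t1 (fun m : ℕ =>
          (∏ i, (G ((m : ℤ) + a i) * G (-(m : ℤ) - b i)) / (G (a i) * G (-(b i)))) *
            w ^ m)).symm

/-- **Independence of the finite hypergeometric sum of the choice of generator `ω`**
(Beukers, §1). Suppose the hypergeometric data is defined over `ℚ`: for every integer `k`
coprime to `q−1`, `(kα₁,…,kα_d)` is a permutation of `(α₁,…,α_d)` modulo `ℤ` and likewise
for `β`. Then for any two generators `ω`, `ω'` of the character group of `𝔽_q^×` the
corresponding finite hypergeometric sums agree for every `t ∈ 𝔽_q`. -/
theorem finHG_indep_of_omega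
    (p : ℕ) [Fact p.Prime] (F : Type*) [Field F] [Fintype F] [DecidableEq F]
    [Algebra (ZMod p) F]
    (ζ : ℂ) (hζ : IsPrimitiveRoot ζ p)
    (ω ω' : MulChar F ℂ)
    (hω : Function.Injective fun x : Fˣ => ω (x : F))
    (hω' : Function.Injective fun x : Fˣ => ω' (x : F))
    (d : ℕ) (α β : Fin d → ℚ)
    (hdisj : ∀ i j, ¬ ∃ n : ℤ, α i - β j = (n : ℚ))
    (a b : Fin d → ℤ)
    (ha : ∀ i, (a i : ℚ) = ((Fintype.card F : ℚ) - 1) * α i)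
    (hb : ∀ j, (b j : ℚ) = ((Fintype.card F : ℚ) - 1) * β j)
    (hQα : ∀ k : ℤ, IsCoprime k ((Fintype.card F : ℤ) - 1) →
      ∃ s : Equiv.Perm (Fin d), ∀ i, ∃ n : ℤ, (k : ℚ) * α i = α (s i) + (n : ℚ))
    (hQβ : ∀ k : ℤ, IsCoprime k ((Fintype.card F : ℤ) - 1) →
      ∃ s : Equiv.Perm (Fin d), ∀ j, ∃ n : ℤ, (k : ℚ) * β j = β (s j) + (n : ℚ))
    (t : F) :
    finHG p F ζ ω d a b t = finHG p F ζ ω' d a b t := by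
    classical
  have hq2 : 1 < Fintype.card F := Fintype.one_lt_card
  set n := Fintype.card F - 1 with hn_def
  haveI : NeZero n := ⟨by omega⟩
  have hcardu : Fintype.card Fˣ = n := by rw [hn_def]; exact Fintype.card_units F
  -- units to the power n are 1
  have hxn : ∀ x : Fˣ, ((x : F)) ^ n = 1 := by
    intro x
    have hx : x ^ n = 1 := by rw [← hcardu]; exact pow_card_eq_one
    rw [← Units.val_pow_eq_pow_val, hx, Units.val_one]
  obtain ⟨g, hg⟩ := IsCyclic.exists_generator (α := Fˣ)
  have horder : orderOf g = n := by
    rw [orderOf_eq_card_of_forall_mem_zpowers hg, Nat.card_eq_fintype_card, hcardu]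
  have prim : ∀ χ : MulChar F ℂ, Function.Injective (fun x : Fˣ => χ (x : F)) →
      IsPrimitiveRoot (χ ((g : Fˣ) : F)) n := by
    intro χ hχ
    refine ⟨?_, ?_⟩
    · rw [← map_pow, hxn, map_one]
    · intro l hl
      have h1 : χ (((g ^ l : Fˣ) : F)) = χ (((1 : Fˣ) : F)) := by
        rw [Units.val_pow_eq_pow_val, map_pow, hl, Units.val_one, map_one]
      have h2 : g ^ l = 1 := hχ h1
      rw [← horder]
      exact orderOf_dvd_of_pow_eq_one h2
  have hzprim := prim ω hω
  have hz'prim := prim ω' hω'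
  obtain ⟨k, hk_lt, hk_eq⟩ := hzprim.eq_pow_of_pow_eq_one hz'prim.pow_eq_one
  have hkcop : Nat.Coprime k n := by
    have h := hz'prim
    rw [← hk_eq] at h
    exact (hzprim.pow_iff_coprime (Nat.pos_of_ne_zero (NeZero.ne n)) k).mp h
  -- ω' = ω ^ k on units
  have hpow : ∀ x : Fˣ, ω' ((x : Fˣ) : F) = (ω ((x : Fˣ) : F)) ^ k := by
    intro x
    have hx : x ∈ Submonoid.powers g := mem_powers_iff_mem_zpowers.mpr (hg x)
    obtain ⟨j, hj⟩ := hx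
    rw [← hj, Units.val_pow_eq_pow_val, map_pow, map_pow, ← hk_eq, ← pow_mul, ← pow_mul,
      Nat.mul_comm]
  have hzpow : ∀ (x : Fˣ) (m : ℤ), (ω' ((x : Fˣ) : F)) ^ m = (ω ((x : Fˣ) : F)) ^ ((k : ℤ) * m) := by
    intro x m
    rw [hpow x, ← zpow_natCast (ω ((x : Fˣ) : F)) k, ← zpow_mul]
  have hG' : ∀ m : ℤ, fieldGaussSum p F ζ ω' m = fieldGaussSum p F ζ ω ((k : ℤ) * m) := by
    intro m
    unfold fieldGaussSum
    exact Finset.sum_congr rfl fun x _ => by rw [hzpow x m]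
  have hGper : ∀ m c : ℤ, fieldGaussSum p F ζ ω (m + (n : ℤ) * c) = fieldGaussSum p F ζ ω m := by
    intro m c
    unfold fieldGaussSum
    refine Finset.sum_congr rfl fun x _ => ?_
    have h1 : (ω ((x : Fˣ) : F)) ^ n = 1 := by rw [← map_pow, hxn, map_one]
    have h0 : ω ((x : Fˣ) : F) ≠ 0 := by
      intro hh
      rw [hh, zero_pow (NeZero.ne n)] at h1
      exact zero_ne_one h1
    rw [zpow_add₀ h0, zpow_mul, zpow_natCast, h1, one_zpow, mul_one]
  have hnZ : ((Fintype.card F : ℤ) - 1) = (n : ℤ) := by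
    rw [hn_def]; omega
  have hkZ : IsCoprime (k : ℤ) ((Fintype.card F : ℤ) - 1) := by
    rw [hnZ, Int.isCoprime_iff_gcd_eq_one, Int.gcd_natCast_natCast]
    exact hkcop
  obtain ⟨s, hs⟩ := hQα (k : ℤ) hkZ
  obtain ⟨s', hs'⟩ := hQβ (k : ℤ) hkZ
  have hnQ : ((n : ℕ) : ℚ) = (Fintype.card F : ℚ) - 1 := by
    rw [hn_def, Nat.cast_sub hq2.le, Nat.cast_one]
  have hsa : ∀ i, ∃ c : ℤ, (k : ℤ) * a i = a (s i) + (n : ℤ) * c := by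
    intro i
    obtain ⟨c0, hc0⟩ := hs i
    refine ⟨c0, ?_⟩
    have hcast : (((k : ℤ) * a i : ℤ) : ℚ) = ((a (s i) + (n : ℤ) * c0 : ℤ) : ℚ) := by
      push_cast
      rw [ha i, ha (s i), hnQ]
      linear_combination ((Fintype.card F : ℚ) - 1) * hc0
    exact_mod_cast hcast
  have hsb : ∀ j, ∃ c : ℤ, (k : ℤ) * b j = b (s' j) + (n : ℤ) * c := by
    intro j
    obtain ⟨c0, hc0⟩ := hs' j
    refine ⟨c0, ?_⟩
    have hcast : (((k : ℤ) * b j : ℤ) : ℚ) = ((b (s' j) + (n : ℤ) * c0 : ℤ) : ℚ) := by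
      push_cast
      rw [hb j, hb (s' j), hnQ]
      linear_combination ((Fintype.card F : ℚ) - 1) * hc0
    exact_mod_cast hcast
  have hkunit : IsUnit (k : ZMod n) := (ZMod.isUnit_iff_coprime k n).mpr hkcop
  have hw : ∀ m : ZMod n,
      (ω' ((-1) ^ d * t)) ^ m.val = (ω ((-1) ^ d * t)) ^ ((k : ZMod n) * m).val := by
    intro m
    by_cases hu : IsUnit ((-1 : F) ^ d * t)
    · obtain ⟨yu, hyu⟩ := hu
      have hk' : ω' ((-1 : F) ^ d * t) = (ω ((-1 : F) ^ d * t)) ^ k := by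
        rw [← hyu]; exact hpow yu
      have h1 : (ω ((-1 : F) ^ d * t)) ^ n = 1 := by
        rw [← hyu, ← map_pow, hxn, map_one]
      rw [hk', ← pow_mul, aux_pow_mod _ _ h1 (k * m.val),
        aux_pow_mod _ _ h1 (((k : ZMod n) * m).val)]
      congr 1
      rw [Nat.mod_eq_of_lt (ZMod.val_lt _), ZMod.val_mul, ZMod.val_natCast, Nat.mod_mul_mod]
    · have h0 : ω ((-1 : F) ^ d * t) = 0 := MulChar.map_nonunit _ hu
      have h0' : ω' ((-1 : F) ^ d * t) = 0 := MulChar.map_nonunit _ hu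
      rw [h0, h0']
      rcases eq_or_ne m 0 with rfl | hm
      · simp
      · have hMne : m.val ≠ 0 := fun hh => hm ((ZMod.val_eq_zero m).mp hh)
        have hM'ne : ((k : ZMod n) * m).val ≠ 0 := by
          intro hh
          exact hm (hkunit.mul_right_eq_zero.mp ((ZMod.val_eq_zero _).mp hh))
        rw [zero_pow hMne, zero_pow hM'ne]
  unfold finHG
  rw [← hn_def]
  congr 1
  exact (finHG_sum_aux (fieldGaussSum p F ζ ω) (fieldGaussSum p F ζ ω')
    (ω ((-1) ^ d * t)) (ω' ((-1) ^ d * t)) a b k hG' hGper s s' hsa hsb hw hkcop).symm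
end
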